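/- arXiv:1207.1729 — 11 statements merged into one kernel-verified Lean document; each statement's English description precedes it below -/
import Mathlib

section
/- Let a, b, c, d : ℤ² → ℝ with b, c, d nowhere-vanishing. Then the hyperbolic operator L on functions ψ : ℤ² → ℝ defined by (Lψ)(m,n) = a(m,n)ψ(m,n) + b(m,n)ψ(m+1,n) + c(m,n)ψ(m,n+1) + d(m,n)ψ(m+1,n+1) admits both a right and a left factorization: there exist a nowhere-vanishing f : ℤ² → ℝ and functions u, v, w : ℤ² → ℝ such that pointwise f·(1+w) = a, f·u = b, f·v = c and f·u·v₁ = d (so L = f·[(1+uT₁)(1+vT₂)+w]); and there exist a nowhere-vanishing g : ℤ² → ℝ and functions ũ, ṽ, w_L : ℤ² → ℝ such that pointwise g·(1+w_L) = a, g·ũ = b, g·ṽ = c and g·ṽ·ũ₂ = d (so L = g·[(1+ṽT₂)(1+ũT₁)+w_L]). -/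
/-! Both factorizations come from one normalization. Given a shift `s` of the lattice, take
`f p = b (p - s) * c p / d (p - s)`, nonzero because `b, c, d` are, and divide the coefficients
of `L` by it: `u = b / f`, `v = c / f`, `w = a / f - 1`. The first three identities then hold
trivially, and `f` was chosen exactly so that `f p * u p * v (p + s) = b p * c (p + s) / f (p + s)`
equals `d p`. The right factorization uses `s = (1, 0)`; the left one uses `s = (0, 1)` with the
roles of `b` and `c` exchanged. -/

theorem exists_shifted_factorization {G K : Type*} [AddGroup G] [Field K] (s : G)
    (a b c d : G → K) (hb : ∀ p, b p ≠ 0) (hc : ∀ p, c p ≠ 0) (hd : ∀ p, d p ≠ 0) :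
    ∃ f u v w : G → K, (∀ p, f p ≠ 0) ∧ (∀ p, f p * (1 + w p) = a p) ∧
      (∀ p, f p * u p = b p) ∧ (∀ p, f p * v p = c p) ∧
      ∀ p, f p * u p * v (p + s) = d p := by
  set f : G → K := fun p => b (p - s) * c p / d (p - s)
  have hf : ∀ p, f p ≠ 0 := fun p => div_ne_zero (mul_ne_zero (hb _) (hc _)) (hd _)
  have hf_shift : ∀ p, f (p + s) = b p * c (p + s) / d p := by simp [f]
  refine ⟨f, fun p => b p / f p, fun p => c p / f p, fun p => a p / f p - 1, hf,
    fun p => ?_, fun p => mul_div_cancel₀ _ (hf p), fun p => mul_div_cancel₀ _ (hf p), fun p => ?_⟩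
  · rw [add_sub_cancel, mul_div_cancel₀ _ (hf p)]
  · show f p * (b p / f p) * (c (p + s) / f (p + s)) = d p
    rw [mul_div_cancel₀ _ (hf p), hf_shift]
    field_simp [hb p, hc (p + s), hd p]

/-- Every hyperbolic second-order difference operator
`(Lψ)(m,n) = a ψ(m,n) + b ψ(m+1,n) + c ψ(m,n+1) + d ψ(m+1,n+1)` on the square lattice,
with `b, c, d` nowhere-vanishing, admits both a right factorization
`L = f·[(1+uT₁)(1+vT₂)+w]` and a left factorization `L = g·[(1+ṽT₂)(1+ũT₁)+w_L]`. -/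
theorem hyperbolic_operator_right_and_left_factorization
    (a b c d : ℤ × ℤ → ℝ)
    (hb : ∀ p, b p ≠ 0) (hc : ∀ p, c p ≠ 0) (hd : ∀ p, d p ≠ 0) :
    (∃ f u v w : ℤ × ℤ → ℝ, (∀ p, f p ≠ 0) ∧
      (∀ m n : ℤ, f (m, n) * (1 + w (m, n)) = a (m, n)) ∧
      (∀ m n : ℤ, f (m, n) * u (m, n) = b (m, n)) ∧
      (∀ m n : ℤ, f (m, n) * v (m, n) = c (m, n)) ∧
      (∀ m n : ℤ, f (m, n) * u (m, n) * v (m + 1, n) = d (m, n))) ∧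
    (∃ g tu tv wL : ℤ × ℤ → ℝ, (∀ p, g p ≠ 0) ∧
      (∀ m n : ℤ, g (m, n) * (1 + wL (m, n)) = a (m, n)) ∧
      (∀ m n : ℤ, g (m, n) * tu (m, n) = b (m, n)) ∧
      (∀ m n : ℤ, g (m, n) * tv (m, n) = c (m, n)) ∧
      (∀ m n : ℤ, g (m, n) * tv (m, n) * tu (m, n + 1) = d (m, n))) := by
  obtain ⟨f, u, v, w, hf, ha, hu, hv, hd₁⟩ := exists_shifted_factorization (1, 0) a b c d hb hc hd
  obtain ⟨g, tv, tu, wL, hg, ha', htv, htu, hd₂⟩ :=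
    exists_shifted_factorization (0, 1) a c b d hc hb hd
  exact ⟨⟨f, u, v, w, hf, fun m n => ha _, fun m n => hu _, fun m n => hv _,
      fun m n => by simpa using hd₁ (m, n)⟩,
    ⟨g, tu, tv, wL, hg, fun m n => ha' _, fun m n => htu _, fun m n => htv _,
      fun m n => by simpa using hd₂ (m, n)⟩⟩
end

section
/- Let u, v, w : ℤ² → ℝ with w nowhere-vanishing, and let ψ : ℤ² → ℝ satisfy ((1+uT₁)(1+vT₂)+w)ψ = 0, that is, (1+w(m,n))ψ(m,n) + u(m,n)ψ(m+1,n) + v(m,n)ψ(m,n+1) + u(m,n)v(m+1,n)ψ(m+1,n+1) = 0 for all (m,n). Define φ = (1+vT₂)ψ, i.e. φ(m,n) = ψ(m,n) + v(m,n)ψ(m,n+1), and χ(m,n) = (φ(m,n) + u(m,n)φ(m+1,n))/w(m,n). Then ((1+vT₂)w⁻¹(1+uT₁)+1)φ = 0, that is, χ(m,n) + v(m,n)χ(m,n+1) + φ(m,n) = 0 for all (m,n). -/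
/-! The equation for `ψ` says `(1+uT₁)(1+vT₂)ψ = -wψ`, i.e. `(1+uT₁)φ = -wψ`, so `χ = -ψ`.
Hence `(1+vT₂)χ + φ = -(1+vT₂)ψ + (1+vT₂)ψ = 0`. -/

theorem div_eq_neg_of_laplace_solution {K : Type*} [Field K] (u v w ψ φ : ℤ × ℤ → K) (m n : ℤ)
    (hw : w (m, n) ≠ 0)
    (hψ : (1 + w (m, n)) * ψ (m, n) + u (m, n) * ψ (m + 1, n)
      + v (m, n) * ψ (m, n + 1) + u (m, n) * v (m + 1, n) * ψ (m + 1, n + 1) = 0)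
    (hφ : ∀ m n : ℤ, φ (m, n) = ψ (m, n) + v (m, n) * ψ (m, n + 1)) :
    (φ (m, n) + u (m, n) * φ (m + 1, n)) / w (m, n) = -ψ (m, n) := by
  rw [div_eq_iff hw, hφ, hφ]
  linear_combination hψ

/-- Laplace transformation of a hyperbolic difference operator on the
square lattice: if `((1+uT₁)(1+vT₂)+w)ψ = 0` with `w` nowhere-vanishing, then
`φ = (1+vT₂)ψ` satisfies `((1+vT₂)w⁻¹(1+uT₁)+1)φ = 0`, where
`χ = w⁻¹(1+uT₁)φ`. -/
theorem laplace_transformation_of_solutions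
    (u v w ψ φ χ : ℤ × ℤ → ℝ)
    (hw : ∀ p, w p ≠ 0)
    (hψ : ∀ m n : ℤ, (1 + w (m, n)) * ψ (m, n) + u (m, n) * ψ (m + 1, n)
      + v (m, n) * ψ (m, n + 1) + u (m, n) * v (m + 1, n) * ψ (m + 1, n + 1) = 0)
    (hφ : ∀ m n : ℤ, φ (m, n) = ψ (m, n) + v (m, n) * ψ (m, n + 1))
    (hχ : ∀ m n : ℤ, χ (m, n) = (φ (m, n) + u (m, n) * φ (m + 1, n)) / w (m, n)) :
    ∀ m n : ℤ, χ (m, n) + v (m, n) * χ (m, n + 1) + φ (m, n) = 0 := by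
  have hχψ : ∀ m n : ℤ, χ (m, n) = -ψ (m, n) := fun m n => by
    rw [hχ, div_eq_neg_of_laplace_solution u v w ψ φ m n (hw _) (hψ m n) hφ]
  intro m n
  rw [hχψ, hχψ, hφ]
  ring
end

section
/- Let u, v, w : ℤ² → ℝ be nowhere-vanishing, set H = v·u₂/(u·v₁), and define f'(m,n) = H(m−1,n)·w(m−1,n)·w(m,n+1)/w(m−1,n+1), u' = f'·u/w, v' = f'·v/w₂, w' = f'·(1+w)/w − 1. Then the operator identity f'·[(1+vT₂)w⁻¹(1+uT₁)+1] = (1+u'T₁)(1+v'T₂)+w' holds, i.e. for every ψ : ℤ² → ℝ and every (m,n): f'(m,n)·[ (ψ(m,n)+u(m,n)ψ(m+1,n))/w(m,n) + v(m,n)·(ψ(m,n+1)+u(m,n+1)ψ(m+1,n+1))/w(m,n+1) + ψ(m,n) ] = (1+w'(m,n))ψ(m,n) + u'(m,n)ψ(m+1,n) + v'(m,n)ψ(m,n+1) + u'(m,n)v'(m+1,n)ψ(m+1,n+1). Moreover (f',u',v',w') is the unique quadruple of functions with f' nowhere-vanishing satisfying this identity. -/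
/-!
Both sides of the identity are four-point operators on `ℤ × ℤ`, and such an operator determines
its coefficients (test it on indicator functions). Comparing coefficients, multiplying the
Laplace transform by `g` gives the normalized form exactly when `u', v', w'` are the stated
multiples of `g`, together with the compatibility condition `u'·v'₁ = g·v·u₂/w₂` for the
diagonal coefficient. As `g` never vanishes, that condition says
`g(m+1,n) = H(m,n)·w(m,n)·w(m+1,n+1)/w(m,n+1)`, a recursion in `m` that `f'` satisfies and that
pins down any solution.
-/

section Stencil

variable {R : Type*}

def stencil [Semiring R] (a b c d ψ : ℤ × ℤ → R) (p : ℤ × ℤ) : R :=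
  a p * ψ p + b p * ψ (p.1 + 1, p.2) + c p * ψ (p.1, p.2 + 1) + d p * ψ (p.1 + 1, p.2 + 1)

theorem stencil_coeffs_eq_of_forall_eq [Semiring R] {a b c d a' b' c' d' : ℤ × ℤ → R}
    {p : ℤ × ℤ} (h : ∀ ψ, stencil a b c d ψ p = stencil a' b' c' d' ψ p) :
    a p = a' p ∧ b p = b' p ∧ c p = c' p ∧ d p = d' p := by
  obtain ⟨m, n⟩ := p
  refine ⟨?_, ?_, ?_, ?_⟩
  · simpa [stencil, Pi.single_apply] using h (Pi.single (m, n) 1)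
  · simpa [stencil, Pi.single_apply] using h (Pi.single (m + 1, n) 1)
  · simpa [stencil, Pi.single_apply] using h (Pi.single (m, n + 1) 1)
  · simpa [stencil, Pi.single_apply] using h (Pi.single (m + 1, n + 1) 1)

/-- The normalized operator `(1 + u T₁)(1 + v T₂) + w`. -/
def normalizedOp [Semiring R] (u v w : ℤ × ℤ → R) : (ℤ × ℤ → R) → ℤ × ℤ → R :=
  stencil (1 + w) u v fun p => u p * v (p.1 + 1, p.2)

/-- The Laplace transform `(1 + v T₂) w⁻¹ (1 + u T₁) + 1` of `normalizedOp u v w`. -/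
def laplaceOp [DivisionRing R] (u v w ψ : ℤ × ℤ → R) (p : ℤ × ℤ) : R :=
  (ψ p + u p * ψ (p.1 + 1, p.2)) / w p
    + v p * (ψ (p.1, p.2 + 1) + u (p.1, p.2 + 1) * ψ (p.1 + 1, p.2 + 1)) / w (p.1, p.2 + 1)
    + ψ p

end Stencil

section Field

variable {K : Type*} [Field K] {u v w g : ℤ × ℤ → K}

theorem mul_laplaceOp_apply_eq_stencil (ψ : ℤ × ℤ → K) (p : ℤ × ℤ) :
    g p * laplaceOp u v w ψ p =
      stencil (fun p => g p * ((w p)⁻¹ + 1)) (fun p => g p * u p / w p)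
        (fun p => g p * v p / w (p.1, p.2 + 1))
        (fun p => g p * v p * u (p.1, p.2 + 1) / w (p.1, p.2 + 1)) ψ p := by
  simp only [laplaceOp, stencil]
  ring

theorem mul_laplaceOp_eq_normalizedOp_iff (hw : ∀ p, w p ≠ 0) {ug vg wg : ℤ × ℤ → K} :
    (∀ ψ m n, g (m, n) * laplaceOp u v w ψ (m, n) = normalizedOp ug vg wg ψ (m, n)) ↔
      (∀ m n, ug (m, n) = g (m, n) * u (m, n) / w (m, n)) ∧
      (∀ m n, vg (m, n) = g (m, n) * v (m, n) / w (m, n + 1)) ∧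
      (∀ m n, wg (m, n) = g (m, n) * (1 + w (m, n)) / w (m, n) - 1) ∧
      (∀ m n, ug (m, n) * vg (m + 1, n) = g (m, n) * v (m, n) * u (m, n + 1) / w (m, n + 1)) := by
  simp only [mul_laplaceOp_apply_eq_stencil, normalizedOp]
  constructor
  · intro h
    have coeffs := fun m n => stencil_coeffs_eq_of_forall_eq fun ψ => h ψ m n
    refine ⟨fun m n => (coeffs m n).2.1.symm, fun m n => (coeffs m n).2.2.1.symm,
      fun m n => ?_, fun m n => (coeffs m n).2.2.2.symm⟩
    have h1 := (coeffs m n).1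
    have := hw (m, n)
    simp only [Pi.add_apply, Pi.one_apply] at h1
    field_simp at h1 ⊢
    linear_combination -h1
  · rintro ⟨hug, hvg, hwg, hcross⟩ ψ m n
    simp only [stencil, Pi.add_apply, Pi.one_apply]
    rw [hcross, hug, hvg, hwg]
    have := hw (m, n)
    field_simp
    ring

theorem gauge_cross_coeff_iff (hu : ∀ p, u p ≠ 0) (hv : ∀ p, v p ≠ 0) (hw : ∀ p, w p ≠ 0)
    {m n : ℤ} (hg : g (m, n) ≠ 0) :
    g (m, n) * u (m, n) / w (m, n) * (g (m + 1, n) * v (m + 1, n) / w (m + 1, n + 1))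
        = g (m, n) * v (m, n) * u (m, n + 1) / w (m, n + 1) ↔
      g (m + 1, n) = v (m, n) * u (m, n + 1) / (u (m, n) * v (m + 1, n))
        * w (m, n) * w (m + 1, n + 1) / w (m, n + 1) := by
  have := hu (m, n); have := hv (m + 1, n)
  have := hw (m, n); have := hw (m + 1, n + 1); have := hw (m, n + 1)
  field_simp

end Field

/-- For nowhere-vanishing `u, v, w` on the square lattice, with
`H = v·u₂/(u·v₁)`, `f'(m,n) = H(m−1,n)·w(m−1,n)·w(m,n+1)/w(m−1,n+1)`,
`u' = f'·u/w`, `v' = f'·v/w₂`, `w' = f'·(1+w)/w − 1`, the operator identity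
`f'·[(1+vT₂)w⁻¹(1+uT₁)+1] = (1+u'T₁)(1+v'T₂)+w'` holds, and `(f',u',v',w')` is the
unique such quadruple with `f'` nowhere-vanishing. -/
theorem laplace_transform_normalized_gauge_identity_and_uniqueness
    (u v w H f' u' v' w' : ℤ × ℤ → ℝ)
    (hu : ∀ p, u p ≠ 0) (hv : ∀ p, v p ≠ 0) (hw : ∀ p, w p ≠ 0)
    (hH : ∀ m n : ℤ, H (m, n) = v (m, n) * u (m, n + 1) / (u (m, n) * v (m + 1, n)))
    (hf' : ∀ m n : ℤ,
      f' (m, n) = H (m - 1, n) * w (m - 1, n) * w (m, n + 1) / w (m - 1, n + 1))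
    (hu' : ∀ m n : ℤ, u' (m, n) = f' (m, n) * u (m, n) / w (m, n))
    (hv' : ∀ m n : ℤ, v' (m, n) = f' (m, n) * v (m, n) / w (m, n + 1))
    (hw' : ∀ m n : ℤ, w' (m, n) = f' (m, n) * (1 + w (m, n)) / w (m, n) - 1) :
    (∀ ψ : ℤ × ℤ → ℝ, ∀ m n : ℤ,
      f' (m, n) * ((ψ (m, n) + u (m, n) * ψ (m + 1, n)) / w (m, n)
        + v (m, n) * (ψ (m, n + 1) + u (m, n + 1) * ψ (m + 1, n + 1)) / w (m, n + 1)
        + ψ (m, n))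
      = (1 + w' (m, n)) * ψ (m, n) + u' (m, n) * ψ (m + 1, n)
        + v' (m, n) * ψ (m, n + 1) + u' (m, n) * v' (m + 1, n) * ψ (m + 1, n + 1)) ∧
    (∀ g ug vg wg : ℤ × ℤ → ℝ, (∀ p, g p ≠ 0) →
      (∀ ψ : ℤ × ℤ → ℝ, ∀ m n : ℤ,
        g (m, n) * ((ψ (m, n) + u (m, n) * ψ (m + 1, n)) / w (m, n)
          + v (m, n) * (ψ (m, n + 1) + u (m, n + 1) * ψ (m + 1, n + 1)) / w (m, n + 1)
          + ψ (m, n))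
        = (1 + wg (m, n)) * ψ (m, n) + ug (m, n) * ψ (m + 1, n)
          + vg (m, n) * ψ (m, n + 1) + ug (m, n) * vg (m + 1, n) * ψ (m + 1, n + 1)) →
      g = f' ∧ ug = u' ∧ vg = v' ∧ wg = w') := by
  have hf'_succ : ∀ m n, f' (m + 1, n) = v (m, n) * u (m, n + 1) / (u (m, n) * v (m + 1, n))
      * w (m, n) * w (m + 1, n + 1) / w (m, n + 1) := by
    intro m n
    rw [hf', add_sub_cancel_right, hH]
  have hf'_ne : ∀ m n, f' (m, n) ≠ 0 := by
    intro m n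
    rw [hf', hH]
    simp [hu, hv, hw]
  refine ⟨(mul_laplaceOp_eq_normalizedOp_iff hw).2 ⟨hu', hv', hw', fun m n => ?_⟩, ?_⟩
  · rw [hu', hv', gauge_cross_coeff_iff hu hv hw (hf'_ne m n)]
    exact hf'_succ m n
  · intro g ug vg wg hg h
    obtain ⟨hug, hvg, hwg, hcross⟩ := (mul_laplaceOp_eq_normalizedOp_iff hw).1 h
    have hg_succ : ∀ m n, g (m + 1, n) = v (m, n) * u (m, n + 1) / (u (m, n) * v (m + 1, n))
        * w (m, n) * w (m + 1, n + 1) / w (m, n + 1) := fun m n =>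
      (gauge_cross_coeff_iff hu hv hw (hg _)).1 (by rw [← hug, ← hvg]; exact hcross m n)
    have hgf : g = f' := funext fun ⟨m, n⟩ => by
      simpa using (hg_succ (m - 1) n).trans (hf'_succ (m - 1) n).symm
    subst hgf
    exact ⟨rfl, funext fun ⟨m, n⟩ => (hug m n).trans (hu' m n).symm,
      funext fun ⟨m, n⟩ => (hvg m n).trans (hv' m n).symm,
      funext fun ⟨m, n⟩ => (hwg m n).trans (hw' m n).symm⟩
end

section
/- Let u, v, w : ℤ² → ℝ be nowhere-vanishing, set H = v·u₂/(u·v₁), and let (u',v',w') be the Laplace transform of (u,v,w) in the normalized gauge: u' = f'·u/w, v' = f'·v/w₂, w' = f'·(1+w)/w − 1 with f'(m,n) = H(m−1,n)·w(m−1,n)·w(m,n+1)/w(m−1,n+1). Set H' = v'·u'₂/(u'·v'₁). Then the gauge invariants transform by: (i) H'·(1+w₂) = 1+w'₂, and (ii) (1+w'₁)·w₁·w₂ = (1+w₁)·H·w·w₁₂. -/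
/-!
Both sides of the Laplace transform are written in gauges `u' = (f'/w)·u`, `v' = (f'/w₂)·v`,
and the curvature is multiplicative in the pair `(u, v)`, so `H'` is `H` times the curvature
of the gauge factors `(f'/w, f'/w₂)`. The normalization of `f'` is exactly such that
`f'₁ = H·w·w₁₂/w₂`, which cancels `H` and leaves `H' = f'₂/w₂`. Since also
`1 + w' = f'·(1 + w)/w`, both identities follow.
-/

noncomputable def curvature (u v : ℤ × ℤ → ℝ) (m n : ℤ) : ℝ :=
  v (m, n) * u (m, n + 1) / (u (m, n) * v (m + 1, n))

theorem curvature_mul (φ ψ u v : ℤ × ℤ → ℝ) (m n : ℤ) :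
    curvature (φ * u) (ψ * v) m n = curvature φ ψ m n * curvature u v m n := by
  simp only [curvature, Pi.mul_apply]
  ring

theorem curvature_ne_zero {u v : ℤ × ℤ → ℝ} (hu : ∀ p, u p ≠ 0) (hv : ∀ p, v p ≠ 0)
    (m n : ℤ) : curvature u v m n ≠ 0 :=
  div_ne_zero (mul_ne_zero (hv _) (hu _)) (mul_ne_zero (hu _) (hv _))

theorem curvature_laplace_gauge (f w : ℤ × ℤ → ℝ) {m n : ℤ} (hf : f (m, n) ≠ 0) :
    curvature (fun p ↦ f p / w p) (fun p ↦ f p / w (p.1, p.2 + 1)) m n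
      = f (m, n + 1) * w (m, n) * w (m + 1, n + 1) / (w (m, n + 1) ^ 2 * f (m + 1, n)) := by
  simp only [curvature]
  field_simp

theorem curvature_laplace_transform {u v w f : ℤ × ℤ → ℝ} {m n : ℤ} (hw : ∀ p, w p ≠ 0)
    (hK : curvature u v m n ≠ 0) (hf : f (m, n) ≠ 0)
    (hf₁ : f (m + 1, n) = curvature u v m n * w (m, n) * w (m + 1, n + 1) / w (m, n + 1)) :
    curvature (fun p ↦ f p * u p / w p) (fun p ↦ f p * v p / w (p.1, p.2 + 1)) m n
      = f (m, n + 1) / w (m, n + 1) := by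
  have gauge_u : (fun p ↦ f p * u p / w p) = (fun p ↦ f p / w p) * u :=
    funext fun p ↦ mul_div_right_comm ..
  have gauge_v : (fun p ↦ f p * v p / w (p.1, p.2 + 1)) = (fun p ↦ f p / w (p.1, p.2 + 1)) * v :=
    funext fun p ↦ mul_div_right_comm ..
  rw [gauge_u, gauge_v, curvature_mul, curvature_laplace_gauge f w hf, hf₁]
  have := hw (m, n); have := hw (m + 1, n + 1); have := hw (m, n + 1)
  field_simp

/-- Transformation law of the gauge invariants (potential `w` and
curvature `H = v·u₂/(u·v₁)`) under the Laplace transformation in the normalized gauge: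
(i) `H'·(1+w₂) = 1+w'₂` and (ii) `(1+w'₁)·w₁·w₂ = (1+w₁)·H·w·w₁₂`. -/
theorem laplace_transform_of_gauge_invariants
    (u v w H f' u' v' w' H' : ℤ × ℤ → ℝ)
    (hu : ∀ p, u p ≠ 0) (hv : ∀ p, v p ≠ 0) (hw : ∀ p, w p ≠ 0)
    (hH : ∀ m n : ℤ, H (m, n) = v (m, n) * u (m, n + 1) / (u (m, n) * v (m + 1, n)))
    (hf' : ∀ m n : ℤ,
      f' (m, n) = H (m - 1, n) * w (m - 1, n) * w (m, n + 1) / w (m - 1, n + 1))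
    (hu' : ∀ m n : ℤ, u' (m, n) = f' (m, n) * u (m, n) / w (m, n))
    (hv' : ∀ m n : ℤ, v' (m, n) = f' (m, n) * v (m, n) / w (m, n + 1))
    (hw' : ∀ m n : ℤ, w' (m, n) = f' (m, n) * (1 + w (m, n)) / w (m, n) - 1)
    (hH' : ∀ m n : ℤ,
      H' (m, n) = v' (m, n) * u' (m, n + 1) / (u' (m, n) * v' (m + 1, n))) :
    (∀ m n : ℤ, H' (m, n) * (1 + w (m, n + 1)) = 1 + w' (m, n + 1)) ∧
    (∀ m n : ℤ, (1 + w' (m + 1, n)) * w (m + 1, n) * w (m, n + 1)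
      = (1 + w (m + 1, n)) * H (m, n) * w (m, n) * w (m + 1, n + 1)) := by
  have hHc (m n : ℤ) : H (m, n) = curvature u v m n := hH m n
  have hH0 (m n : ℤ) : H (m, n) ≠ 0 := hHc m n ▸ curvature_ne_zero hu hv m n
  have hf'0 (m n : ℤ) : f' (m, n) ≠ 0 := by
    rw [hf']
    exact div_ne_zero (mul_ne_zero (mul_ne_zero (hH0 _ _) (hw _)) (hw _)) (hw _)
  have hf'₁ (m n : ℤ) : f' (m + 1, n) = H (m, n) * w (m, n) * w (m + 1, n + 1) / w (m, n + 1) := by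
    simpa using hf' (m + 1) n
  have hw'₁ (m n : ℤ) : 1 + w' (m, n) = f' (m, n) * (1 + w (m, n)) / w (m, n) := by
    rw [hw', add_sub_cancel]
  have hH'f (m n : ℤ) : H' (m, n) = f' (m, n + 1) / w (m, n + 1) := by
    have hu'f : u' = fun p ↦ f' p * u p / w p := funext fun p ↦ hu' p.1 p.2
    have hv'f : v' = fun p ↦ f' p * v p / w (p.1, p.2 + 1) := funext fun p ↦ hv' p.1 p.2
    rw [hH', ← curvature, hu'f, hv'f]
    exact curvature_laplace_transform hw (curvature_ne_zero hu hv m n) (hf'0 m n) (hHc m n ▸ hf'₁ m n)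
  refine ⟨fun m n ↦ ?_, fun m n ↦ ?_⟩
  · rw [hH'f, hw'₁, div_mul_eq_mul_div]
  · rw [hw'₁, hf'₁]
    have := hw (m + 1, n); have := hw (m, n + 1)
    field_simp
end

section
/- Let u, v, w : ℤ² → ℝ be nowhere-vanishing, let (u',v',w') be the Laplace transform of (u,v,w) in the normalized gauge, assume w' is nowhere-vanishing, and let (u'',v'',w'') be the Laplace transform of (u',v',w') in the normalized gauge. Then the discrete 2D Toda lattice chain equation holds: (1+w''₁)·(1+w₂)·w'₁·w'₂ = (1+w'₁)·(1+w'₂)·w'·w'₁₂ at every point of ℤ², i.e. ((w''₁+1)/(w'₁+1))·((w₂+1)/(w'₂+1)) = w'w'₁₂/(w'₁w'₂) whenever the denominators are nonzero. -/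
/-!
The whole computation rests on one identity: the invariant `H' = v' u'₂ / (u' v'₁)` of the
transformed triple is `f'₂ / w₂`, because the factors `u, v, H` all cancel once `f'₁` is expanded.
Writing `1 + w' = f' (1 + w) / w` and `1 + w''₁ = f''₁ (1 + w'₁) / w'₁` with
`f''₁ = H' w' w'₁₂ / w'₂`, the factor `f'₂` then cancels between the two sides of the chain equation.
-/

section LaplaceTransform

variable {K : Type*} [Field K] {u v w H f' u' v' w' H' : ℤ × ℤ → K}

lemma laplace_invariant_ne_zero (hu : ∀ p, u p ≠ 0) (hv : ∀ p, v p ≠ 0)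
    (hH : ∀ m n : ℤ, H (m, n) = v (m, n) * u (m, n + 1) / (u (m, n) * v (m + 1, n)))
    (m n : ℤ) : H (m, n) ≠ 0 := by
  rw [hH]
  exact div_ne_zero (mul_ne_zero (hv _) (hu _)) (mul_ne_zero (hu _) (hv _))

lemma laplace_factor_ne_zero (hw : ∀ p, w p ≠ 0) (hH0 : ∀ m n : ℤ, H (m, n) ≠ 0)
    (hf' : ∀ m n : ℤ,
      f' (m, n) = H (m - 1, n) * w (m - 1, n) * w (m, n + 1) / w (m - 1, n + 1))
    (m n : ℤ) : f' (m, n) ≠ 0 := by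
  rw [hf']
  exact div_ne_zero (mul_ne_zero (mul_ne_zero (hH0 _ _) (hw _)) (hw _)) (hw _)

lemma laplace_factor_succ
    (hf' : ∀ m n : ℤ,
      f' (m, n) = H (m - 1, n) * w (m - 1, n) * w (m, n + 1) / w (m - 1, n + 1))
    (m n : ℤ) : f' (m + 1, n) = H (m, n) * w (m, n) * w (m + 1, n + 1) / w (m, n + 1) := by
  simpa using hf' (m + 1) n

lemma one_add_laplace_potential
    (hw' : ∀ m n : ℤ, w' (m, n) = f' (m, n) * (1 + w (m, n)) / w (m, n) - 1) (m n : ℤ) :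
    1 + w' (m, n) = f' (m, n) * (1 + w (m, n)) / w (m, n) := by
  rw [hw']
  ring

lemma laplace_invariant_transform (hu : ∀ p, u p ≠ 0) (hv : ∀ p, v p ≠ 0)
    (hw : ∀ p, w p ≠ 0)
    (hH : ∀ m n : ℤ, H (m, n) = v (m, n) * u (m, n + 1) / (u (m, n) * v (m + 1, n)))
    (hf' : ∀ m n : ℤ,
      f' (m, n) = H (m - 1, n) * w (m - 1, n) * w (m, n + 1) / w (m - 1, n + 1))
    (hu' : ∀ m n : ℤ, u' (m, n) = f' (m, n) * u (m, n) / w (m, n))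
    (hv' : ∀ m n : ℤ, v' (m, n) = f' (m, n) * v (m, n) / w (m, n + 1))
    (hH' : ∀ m n : ℤ,
      H' (m, n) = v' (m, n) * u' (m, n + 1) / (u' (m, n) * v' (m + 1, n)))
    (m n : ℤ) : H' (m, n) = f' (m, n + 1) / w (m, n + 1) := by
  have hH0 := laplace_invariant_ne_zero hu hv hH
  have hf'0 := laplace_factor_ne_zero hw hH0 hf'
  rw [hH', hv', hu', hu', hv', laplace_factor_succ hf', hH]
  field_simp [hu (m, n), hu (m, n + 1), hv (m, n), hv (m + 1, n), hw (m, n), hw (m, n + 1),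
    hw (m + 1, n + 1), hf'0 m n]

end LaplaceTransform

theorem discrete_toda_chain_equation_general
    (u v w H f' u' v' w' H' f'' w'' : ℤ × ℤ → ℝ)
    (hu : ∀ p, u p ≠ 0) (hv : ∀ p, v p ≠ 0) (hw : ∀ p, w p ≠ 0)
    -- the Laplace transform of (u,v,w) in the normalized gauge
    (hH : ∀ m n : ℤ, H (m, n) = v (m, n) * u (m, n + 1) / (u (m, n) * v (m + 1, n)))
    (hf' : ∀ m n : ℤ,
      f' (m, n) = H (m - 1, n) * w (m - 1, n) * w (m, n + 1) / w (m - 1, n + 1))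
    (hu' : ∀ m n : ℤ, u' (m, n) = f' (m, n) * u (m, n) / w (m, n))
    (hv' : ∀ m n : ℤ, v' (m, n) = f' (m, n) * v (m, n) / w (m, n + 1))
    (hw' : ∀ m n : ℤ, w' (m, n) = f' (m, n) * (1 + w (m, n)) / w (m, n) - 1)
    (hw'0 : ∀ p, w' p ≠ 0)
    -- the Laplace transform of (u',v',w') in the normalized gauge
    (hH' : ∀ m n : ℤ,
      H' (m, n) = v' (m, n) * u' (m, n + 1) / (u' (m, n) * v' (m + 1, n)))
    (hf'' : ∀ m n : ℤ,
      f'' (m, n) = H' (m - 1, n) * w' (m - 1, n) * w' (m, n + 1) / w' (m - 1, n + 1))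
    (hw'' : ∀ m n : ℤ, w'' (m, n) = f'' (m, n) * (1 + w' (m, n)) / w' (m, n) - 1) :
    ∀ m n : ℤ,
      (1 + w'' (m + 1, n)) * (1 + w (m, n + 1)) * (w' (m + 1, n) * w' (m, n + 1))
      = (1 + w' (m + 1, n)) * (1 + w' (m, n + 1)) * (w' (m, n) * w' (m + 1, n + 1)) := by
  intro m n
  rw [one_add_laplace_potential hw'' (m + 1) n, laplace_factor_succ hf'',
    laplace_invariant_transform hu hv hw hH hf' hu' hv' hH',
    one_add_laplace_potential hw' m (n + 1)]
  field_simp [hw'0 (m + 1, n), hw'0 (m, n + 1)]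

/-- The discrete 2D Toda lattice chain equation for two successive
Laplace transformations `(u,v,w) → (u',v',w') → (u'',v'',w'')` in the normalized gauge:
`(1+w''₁)·(1+w₂)·w'₁·w'₂ = (1+w'₁)·(1+w'₂)·w'·w'₁₂`. -/
theorem discrete_toda_chain_equation
    (u v w H f' u' v' w' H' f'' u'' v'' w'' : ℤ × ℤ → ℝ)
    (hu : ∀ p, u p ≠ 0) (hv : ∀ p, v p ≠ 0) (hw : ∀ p, w p ≠ 0)
    -- the Laplace transform of (u,v,w) in the normalized gauge
    (hH : ∀ m n : ℤ, H (m, n) = v (m, n) * u (m, n + 1) / (u (m, n) * v (m + 1, n)))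
    (hf' : ∀ m n : ℤ,
      f' (m, n) = H (m - 1, n) * w (m - 1, n) * w (m, n + 1) / w (m - 1, n + 1))
    (hu' : ∀ m n : ℤ, u' (m, n) = f' (m, n) * u (m, n) / w (m, n))
    (hv' : ∀ m n : ℤ, v' (m, n) = f' (m, n) * v (m, n) / w (m, n + 1))
    (hw' : ∀ m n : ℤ, w' (m, n) = f' (m, n) * (1 + w (m, n)) / w (m, n) - 1)
    (hw'0 : ∀ p, w' p ≠ 0)
    -- the Laplace transform of (u',v',w') in the normalized gauge
    (hH' : ∀ m n : ℤ,
      H' (m, n) = v' (m, n) * u' (m, n + 1) / (u' (m, n) * v' (m + 1, n)))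
    (hf'' : ∀ m n : ℤ,
      f'' (m, n) = H' (m - 1, n) * w' (m - 1, n) * w' (m, n + 1) / w' (m - 1, n + 1))
    (hu'' : ∀ m n : ℤ, u'' (m, n) = f'' (m, n) * u' (m, n) / w' (m, n))
    (hv'' : ∀ m n : ℤ, v'' (m, n) = f'' (m, n) * v' (m, n) / w' (m, n + 1))
    (hw'' : ∀ m n : ℤ, w'' (m, n) = f'' (m, n) * (1 + w' (m, n)) / w' (m, n) - 1) :
    ∀ m n : ℤ,
      (1 + w'' (m + 1, n)) * (1 + w (m, n + 1)) * (w' (m + 1, n) * w' (m, n + 1))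
      = (1 + w' (m + 1, n)) * (1 + w' (m, n + 1)) * (w' (m, n) * w' (m + 1, n + 1)) :=
  discrete_toda_chain_equation_general u v w H f' u' v' w' H' f'' w'' hu hv hw hH hf' hu' hv' hw'
    hw'0 hH' hf'' hw''
end

section
/- Let a, b : ℤ² → ℝ be nowhere-vanishing with 1+a₁, 1+a₂, 1+b₁, 1+b₂ nowhere-vanishing, and suppose the period-2 discrete Toda chain equations hold at every point: (a₁+1)(a₂+1)·b₁·b₂ = (b₁+1)(b₂+1)·b·b₁₂ and (b₁+1)(b₂+1)·a₁·a₂ = (a₁+1)(a₂+1)·a·a₁₂. Then the function G = a·b satisfies G·G₁₂ = G₁·G₂ at every point of ℤ². -/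
theorem mul_mul_eq_of_cross_mul_eq {M : Type*} [CommMonoidWithZero M] [IsLeftCancelMulZero M]
    {p q x y u v : M}
    (hp : p ≠ 0) (hq : q ≠ 0) (h₁ : p * x = q * y) (h₂ : q * u = p * v) :
    x * u = y * v :=
  mul_left_cancel₀ (mul_ne_zero hp hq) <|
    calc p * q * (x * u) = p * x * (q * u) := mul_mul_mul_comm p q x u
      _ = q * y * (p * v) := by rw [h₁, h₂]
      _ = p * q * (y * v) := by rw [mul_mul_mul_comm, mul_comm q p]

theorem period_two_toda_chain_product_equation_general
    (a b : ℤ × ℤ → ℝ)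
    (ha1 : ∀ m n : ℤ, 1 + a (m + 1, n) ≠ 0) (ha2 : ∀ m n : ℤ, 1 + a (m, n + 1) ≠ 0)
    (hb1 : ∀ m n : ℤ, 1 + b (m + 1, n) ≠ 0) (hb2 : ∀ m n : ℤ, 1 + b (m, n + 1) ≠ 0)
    (hchain1 : ∀ m n : ℤ,
      (a (m + 1, n) + 1) * (a (m, n + 1) + 1) * (b (m + 1, n) * b (m, n + 1))
      = (b (m + 1, n) + 1) * (b (m, n + 1) + 1) * (b (m, n) * b (m + 1, n + 1)))
    (hchain2 : ∀ m n : ℤ,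
      (b (m + 1, n) + 1) * (b (m, n + 1) + 1) * (a (m + 1, n) * a (m, n + 1))
      = (a (m + 1, n) + 1) * (a (m, n + 1) + 1) * (a (m, n) * a (m + 1, n + 1))) :
    ∀ m n : ℤ,
      (a (m, n) * b (m, n)) * (a (m + 1, n + 1) * b (m + 1, n + 1))
      = (a (m + 1, n) * b (m + 1, n)) * (a (m, n + 1) * b (m, n + 1)) := by
  intro m n
  have ha : (a (m + 1, n) + 1) * (a (m, n + 1) + 1) ≠ 0 := by
    rw [add_comm, add_comm (a _)]; exact mul_ne_zero (ha1 m n) (ha2 m n)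
  have hb : (b (m + 1, n) + 1) * (b (m, n + 1) + 1) ≠ 0 := by
    rw [add_comm, add_comm (b _)]; exact mul_ne_zero (hb1 m n) (hb2 m n)
  linear_combination -mul_mul_eq_of_cross_mul_eq ha hb (hchain1 m n) (hchain2 m n)

/-- For the period-2 cyclic Laplace chain `w^{2k} = a`, `w^{2k+1} = b`
of the discrete 2D Toda lattice, the product `G = a·b` satisfies `G·G₁₂ = G₁·G₂`. -/
theorem period_two_toda_chain_product_equation
    (a b : ℤ × ℤ → ℝ)
    (ha : ∀ p, a p ≠ 0) (hb : ∀ p, b p ≠ 0)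
    (ha1 : ∀ m n : ℤ, 1 + a (m + 1, n) ≠ 0) (ha2 : ∀ m n : ℤ, 1 + a (m, n + 1) ≠ 0)
    (hb1 : ∀ m n : ℤ, 1 + b (m + 1, n) ≠ 0) (hb2 : ∀ m n : ℤ, 1 + b (m, n + 1) ≠ 0)
    (hchain1 : ∀ m n : ℤ,
      (a (m + 1, n) + 1) * (a (m, n + 1) + 1) * (b (m + 1, n) * b (m, n + 1))
      = (b (m + 1, n) + 1) * (b (m, n + 1) + 1) * (b (m, n) * b (m + 1, n + 1)))
    (hchain2 : ∀ m n : ℤ,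
      (b (m + 1, n) + 1) * (b (m, n + 1) + 1) * (a (m + 1, n) * a (m, n + 1))
      = (a (m + 1, n) + 1) * (a (m, n + 1) + 1) * (a (m, n) * a (m + 1, n + 1))) :
    ∀ m n : ℤ,
      (a (m, n) * b (m, n)) * (a (m + 1, n + 1) * b (m + 1, n + 1))
      = (a (m + 1, n) * b (m + 1, n)) * (a (m, n + 1) * b (m, n + 1)) :=
  period_two_toda_chain_product_equation_general a b ha1 ha2 hb1 hb2 hchain1 hchain2
end

section
/- Let C ∈ ℝ, C ≠ 0, let b : ℤ² → ℝ be nowhere-vanishing with 1+b₁ and 1+b₂ nowhere-vanishing, and set a = C/b (pointwise). If the chain equation (a₁+1)(a₂+1)·b₁·b₂ = (b₁+1)(b₂+1)·b·b₁₂ holds at every point, then b satisfies the discrete sinh-Gordon type equation (C+b₁)·(C+b₂) = b·b₁₂·(1+b₁)·(1+b₂) at every point of ℤ², i.e. ((C+b₁)/(1+b₁))·((C+b₂)/(1+b₂)) = b·b₁₂. -/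
/-! Multiplying `a + 1 = C / b + 1` by `b` gives `C + b`, so the left side of the chain equation
is `(C + b₁)(C + b₂)`, while its right side is that of the sinh-Gordon equation reordered. -/

theorem div_add_one_mul_cancel {K : Type*} [DivisionRing K] (c : K) {x : K} (hx : x ≠ 0) :
    (c / x + 1) * x = c + x := by
  rw [add_mul, div_mul_cancel₀ c hx, one_mul]

theorem discrete_sinh_gordon_reduction_general
    (C : ℝ)
    (b a : ℤ × ℤ → ℝ)
    (hb : ∀ p, b p ≠ 0)
    (ha : ∀ p, a p = C / b p)
    (hchain : ∀ m n : ℤ,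
      (a (m + 1, n) + 1) * (a (m, n + 1) + 1) * (b (m + 1, n) * b (m, n + 1))
      = (b (m + 1, n) + 1) * (b (m, n + 1) + 1) * (b (m, n) * b (m + 1, n + 1))) :
    ∀ m n : ℤ,
      (C + b (m + 1, n)) * (C + b (m, n + 1))
      = b (m, n) * b (m + 1, n + 1) * (1 + b (m + 1, n)) * (1 + b (m, n + 1)) := by
  intro m n
  have chain := hchain m n
  rw [ha, ha, mul_mul_mul_comm, div_add_one_mul_cancel C (hb _),
    div_add_one_mul_cancel C (hb _)] at chain
  rw [chain]
  ring

/-- The period-2 cyclic reduction of the discrete 2D Toda lattice with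
`a = C/b` yields the discrete sinh-Gordon type equation
`(C+b₁)·(C+b₂) = b·b₁₂·(1+b₁)·(1+b₂)`. -/
theorem discrete_sinh_gordon_reduction
    (C : ℝ) (hC : C ≠ 0)
    (b a : ℤ × ℤ → ℝ)
    (hb : ∀ p, b p ≠ 0)
    (hb1 : ∀ m n : ℤ, 1 + b (m + 1, n) ≠ 0) (hb2 : ∀ m n : ℤ, 1 + b (m, n + 1) ≠ 0)
    (ha : ∀ p, a p = C / b p)
    (hchain : ∀ m n : ℤ,
      (a (m + 1, n) + 1) * (a (m, n + 1) + 1) * (b (m + 1, n) * b (m, n + 1))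
      = (b (m + 1, n) + 1) * (b (m, n + 1) + 1) * (b (m, n) * b (m + 1, n + 1))) :
    ∀ m n : ℤ,
      (C + b (m + 1, n)) * (C + b (m, n + 1))
      = b (m, n) * b (m + 1, n + 1) * (1 + b (m + 1, n)) * (1 + b (m, n + 1)) :=
  discrete_sinh_gordon_reduction_general C b a hb ha hchain
end

section
/- Let b, c, d : ℤ² → ℝ be everywhere positive. Then there exist unique everywhere positive functions u, v, w : ℤ² → ℝ with u·v = b, u·w = c, v·w = d pointwise (namely u = √(bc/d), v = √(bd/c), w = √(cd/b)); and with this choice, for every ψ : ℤ² → ℝ and every (m,n): (Q⁺Qψ)(m,n) = (u(m,n)² + v(m−1,n)² + w(m,n−1)²)ψ(m,n) + b(m,n)ψ(m+1,n) + b(m−1,n)ψ(m−1,n) + c(m,n)ψ(m,n+1) + c(m,n−1)ψ(m,n−1) + d(m−1,n)ψ(m−1,n+1) + d(m,n−1)ψ(m+1,n−1). Consequently every real self-adjoint second-order operator L on the equilateral triangle lattice with positive nearest-neighbour couplings b, c, d and arbitrary diagonal part a admits a unique factorization L = Q⁺Q + W with u, v, w positive, where W = a − u² − (v₋₁)² −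 (w₋₂)². -/
/-- The black triangle operator `Q = u + vT₁ + wT₂` on the equilateral triangle lattice. -/
def triQ (u v w : ℤ × ℤ → ℝ) (ψ : ℤ × ℤ → ℝ) : ℤ × ℤ → ℝ :=
  fun p => u p * ψ p + v p * ψ (p.1 + 1, p.2) + w p * ψ (p.1, p.2 + 1)

/-- The formal adjoint `Q⁺` of the black triangle operator. -/
def triQadj (u v w : ℤ × ℤ → ℝ) (ψ : ℤ × ℤ → ℝ) : ℤ × ℤ → ℝ :=
  fun p => u p * ψ p + v (p.1 - 1, p.2) * ψ (p.1 - 1, p.2)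
    + w (p.1, p.2 - 1) * ψ (p.1, p.2 - 1)

/-!
The system `u v = b`, `u w = c`, `v w = d` forces `u² = (u v)(u w)/(v w) = b c / d`, and
symmetrically for `v` and `w`; so positivity leaves exactly one solution, the square roots.
In `Q⁺Q` every off-diagonal coefficient is a product of two of `u, v, w` taken at the same
vertex, hence one of the couplings `b, c, d`, while the diagonal collects the three squares.
-/

lemma Real.sqrt_mul_div_mul_sqrt_mul_div {x y z : ℝ} (hx : 0 < x) (hy : 0 < y) (hz : 0 < z) :
    √(x * y / z) * √(x * z / y) = x := by
  rw [← Real.sqrt_mul (by positivity), show x * y / z * (x * z / y) = x ^ 2 by field_simp,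
    Real.sqrt_sq hx.le]

lemma eq_sqrt_mul_div_of_mul_eq {u v w b c d : ℝ} (hu : 0 ≤ u) (hd : d ≠ 0)
    (huv : u * v = b) (huw : u * w = c) (hvw : v * w = d) :
    u = √(b * c / d) := by
  subst huv huw hvw
  rw [show u * v * (u * w) = u ^ 2 * (v * w) by ring, mul_div_cancel_right₀ _ hd, Real.sqrt_sq hu]

theorem triQadj_triQ_apply {u v w b c d : ℤ × ℤ → ℝ}
    (huv : ∀ p, u p * v p = b p) (huw : ∀ p, u p * w p = c p) (hvw : ∀ p, v p * w p = d p)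
    (ψ : ℤ × ℤ → ℝ) (m n : ℤ) :
    triQadj u v w (triQ u v w ψ) (m, n)
      = (u (m, n) ^ 2 + v (m - 1, n) ^ 2 + w (m, n - 1) ^ 2) * ψ (m, n)
        + b (m, n) * ψ (m + 1, n) + b (m - 1, n) * ψ (m - 1, n)
        + c (m, n) * ψ (m, n + 1) + c (m, n - 1) * ψ (m, n - 1)
        + d (m - 1, n) * ψ (m - 1, n + 1) + d (m, n - 1) * ψ (m + 1, n - 1) := by
  simp only [triQ, triQadj, sub_add_cancel]
  linear_combination ψ (m + 1, n) * huv (m, n) + ψ (m - 1, n) * huv (m - 1, n)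
    + ψ (m, n + 1) * huw (m, n) + ψ (m, n - 1) * huw (m, n - 1)
    + ψ (m - 1, n + 1) * hvw (m - 1, n) + ψ (m + 1, n - 1) * hvw (m, n - 1)

/-- Given positive couplings `b, c, d` on the edges of the equilateral
triangle lattice, there are unique positive `u, v, w` with `u·v = b`, `u·w = c`,
`v·w = d`; for this choice `Q⁺Q` has the stated second-order form, and consequently the
self-adjoint operator `L` with couplings `b, c, d` and diagonal part `a` factorizes
uniquely as `L = Q⁺Q + W` with `W = a − u² − (v₋₁)² − (w₋₂)²`. -/
theorem triangle_lattice_factorization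
    (a b c d : ℤ × ℤ → ℝ)
    (hb : ∀ p, 0 < b p) (hc : ∀ p, 0 < c p) (hd : ∀ p, 0 < d p) :
    ∃ u v w : ℤ × ℤ → ℝ,
      ((∀ p, 0 < u p) ∧ (∀ p, 0 < v p) ∧ (∀ p, 0 < w p) ∧
        (∀ p, u p * v p = b p) ∧ (∀ p, u p * w p = c p) ∧ (∀ p, v p * w p = d p)) ∧
      -- uniqueness of the positive factorization
      (∀ u' v' w' : ℤ × ℤ → ℝ,
        (∀ p, 0 < u' p) → (∀ p, 0 < v' p) → (∀ p, 0 < w' p) →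
        (∀ p, u' p * v' p = b p) → (∀ p, u' p * w' p = c p) → (∀ p, v' p * w' p = d p) →
        u' = u ∧ v' = v ∧ w' = w) ∧
      -- the explicit values
      (∀ p, u p = Real.sqrt (b p * c p / d p)) ∧
      (∀ p, v p = Real.sqrt (b p * d p / c p)) ∧
      (∀ p, w p = Real.sqrt (c p * d p / b p)) ∧
      -- the second-order form of Q⁺Q
      (∀ ψ : ℤ × ℤ → ℝ, ∀ m n : ℤ,
        triQadj u v w (triQ u v w ψ) (m, n)
        = (u (m, n) ^ 2 + v (m - 1, n) ^ 2 + w (m, n - 1) ^ 2) * ψ (m, n)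
          + b (m, n) * ψ (m + 1, n) + b (m - 1, n) * ψ (m - 1, n)
          + c (m, n) * ψ (m, n + 1) + c (m, n - 1) * ψ (m, n - 1)
          + d (m - 1, n) * ψ (m - 1, n + 1) + d (m, n - 1) * ψ (m + 1, n - 1)) ∧
      -- consequently L = Q⁺Q + W with W = a − u² − (v₋₁)² − (w₋₂)²
      (∀ ψ : ℤ × ℤ → ℝ, ∀ m n : ℤ,
        triQadj u v w (triQ u v w ψ) (m, n)
          + (a (m, n) - u (m, n) ^ 2 - v (m - 1, n) ^ 2 - w (m, n - 1) ^ 2) * ψ (m, n)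
        = a (m, n) * ψ (m, n)
          + b (m, n) * ψ (m + 1, n) + b (m - 1, n) * ψ (m - 1, n)
          + c (m, n) * ψ (m, n + 1) + c (m, n - 1) * ψ (m, n - 1)
          + d (m - 1, n) * ψ (m - 1, n + 1) + d (m, n - 1) * ψ (m + 1, n - 1)) := by
  set u : ℤ × ℤ → ℝ := fun p => √(b p * c p / d p)
  set v : ℤ × ℤ → ℝ := fun p => √(b p * d p / c p)
  set w : ℤ × ℤ → ℝ := fun p => √(c p * d p / b p)
  have huv : ∀ p, u p * v p = b p := fun p =>
    Real.sqrt_mul_div_mul_sqrt_mul_div (hb p) (hc p) (hd p)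
  have huw : ∀ p, u p * w p = c p := fun p => by
    simp only [u, w, mul_comm (b p) (c p)]
    exact Real.sqrt_mul_div_mul_sqrt_mul_div (hc p) (hb p) (hd p)
  have hvw : ∀ p, v p * w p = d p := fun p => by
    simp only [v, w, mul_comm (b p) (d p), mul_comm (c p) (d p)]
    exact Real.sqrt_mul_div_mul_sqrt_mul_div (hd p) (hb p) (hc p)
  refine ⟨u, v, w, ⟨fun p => Real.sqrt_pos.2 (div_pos (mul_pos (hb p) (hc p)) (hd p)),
    fun p => Real.sqrt_pos.2 (div_pos (mul_pos (hb p) (hd p)) (hc p)),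
    fun p => Real.sqrt_pos.2 (div_pos (mul_pos (hc p) (hd p)) (hb p)), huv, huw, hvw⟩,
    ?_, fun _ => rfl, fun _ => rfl, fun _ => rfl, triQadj_triQ_apply huv huw hvw, fun ψ m n => ?_⟩
  · intro u' v' w' hu' hv' hw' huv' huw' hvw'
    refine ⟨funext fun p => ?_, funext fun p => ?_, funext fun p => ?_⟩
    · exact eq_sqrt_mul_div_of_mul_eq (hu' p).le (hd p).ne' (huv' p) (huw' p) (hvw' p)
    · exact eq_sqrt_mul_div_of_mul_eq (hv' p).le (hc p).ne' (by rw [mul_comm, huv'])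
        (hvw' p) (huw' p)
    · exact eq_sqrt_mul_div_of_mul_eq (hw' p).le (hb p).ne' (by rw [mul_comm, huw'])
        (by rw [mul_comm, hvw']) (huv' p)
  · rw [triQadj_triQ_apply huv huw hvw]
    ring
end

section
/- Let u, v, w, u', v', w' : ℤ² → ℝ be everywhere positive and W, W' : ℤ² → ℝ, and suppose the black and white factorizations give the same operator: Q⁺Qψ + W·ψ = Q'⁺Q'ψ + W'·ψ for all ψ : ℤ² → ℝ, where (Qψ)(m,n) = u(m,n)ψ(m,n) + v(m,n)ψ(m+1,n) + w(m,n)ψ(m,n+1) and (Q'ψ)(m,n) = u'(m,n)ψ(m,n) + v'(m,n)ψ(m−1,n) + w'(m,n)ψ(m,n−1). Then for every (m,n) the products of the black-triangle coefficients and of the white-triangle coefficients attached to each edge coincide: u(m,n)·v(m,n) = u'(m+1,n)·v'(m+1,n), u(m,n)·w(m,n) = u'(m,n+1)·w'(m,n+1), and v(m,n)·w(m,n) = v'(m+1,n+1)·w'(m+1,n+1). -/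
/-- The black triangle operator `Q = u + vT₁ + wT₂`. -/
def blackQ (u v w : ℤ × ℤ → ℝ) (ψ : ℤ × ℤ → ℝ) : ℤ × ℤ → ℝ :=
  fun p => u p * ψ p + v p * ψ (p.1 + 1, p.2) + w p * ψ (p.1, p.2 + 1)

/-- The formal adjoint of the black triangle operator. -/
def blackQadj (u v w : ℤ × ℤ → ℝ) (ψ : ℤ × ℤ → ℝ) : ℤ × ℤ → ℝ :=
  fun p => u p * ψ p + v (p.1 - 1, p.2) * ψ (p.1 - 1, p.2)
    + w (p.1, p.2 - 1) * ψ (p.1, p.2 - 1)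

/-- The white triangle operator `Q' = u' + v'T₁⁻¹ + w'T₂⁻¹`. -/
def whiteQ (u' v' w' : ℤ × ℤ → ℝ) (ψ : ℤ × ℤ → ℝ) : ℤ × ℤ → ℝ :=
  fun p => u' p * ψ p + v' p * ψ (p.1 - 1, p.2) + w' p * ψ (p.1, p.2 - 1)

/-- The formal adjoint of the white triangle operator. -/
def whiteQadj (u' v' w' : ℤ × ℤ → ℝ) (ψ : ℤ × ℤ → ℝ) : ℤ × ℤ → ℝ :=
  fun p => u' p * ψ p + v' (p.1 + 1, p.2) * ψ (p.1 + 1, p.2)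
    + w' (p.1, p.2 + 1) * ψ (p.1, p.2 + 1)

/-!
Testing both factorizations on the delta function at `q` and evaluating at a neighbour `p ≠ q`
kills the potentials `W`, `W'`, so the off-diagonal matrix entries `L(p, q)` of `Q⁺Q` and
`Q'⁺Q'` agree. For each edge `{p, q}` exactly one term of each composite contributes to that
entry: `Q⁺Q` sees it through the black triangle containing the edge, `Q'⁺Q'` through the white
one, and the entries are the two coefficient products.
-/

theorem apply_single_eq_of_add_potential_eq {α : Type*} [DecidableEq α]
    {L L' : (α → ℝ) → α → ℝ} {W W' : α → ℝ}
    (h : ∀ ψ p, L ψ p + W p * ψ p = L' ψ p + W' p * ψ p) {p q : α} (hpq : p ≠ q) :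
    L (Pi.single q 1) p = L' (Pi.single q 1) p := by
  simpa [Pi.single_apply, hpq] using h (Pi.single q 1) p

section Entries

variable (u v w : ℤ × ℤ → ℝ) (m n : ℤ)

theorem blackQadj_blackQ_single_right :
    blackQadj u v w (blackQ u v w (Pi.single (m + 1, n) 1)) (m, n) = u (m, n) * v (m, n) := by
  simp [blackQ, blackQadj, sub_eq_add_neg, add_assoc, mul_comm]

theorem blackQadj_blackQ_single_up :
    blackQadj u v w (blackQ u v w (Pi.single (m, n + 1) 1)) (m, n) = u (m, n) * w (m, n) := by
  simp [blackQ, blackQadj, sub_eq_add_neg, add_assoc, mul_comm]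

theorem blackQadj_blackQ_single_up_left :
    blackQadj u v w (blackQ u v w (Pi.single (m, n + 1) 1)) (m + 1, n) = v (m, n) * w (m, n) := by
  simp [blackQ, blackQadj, sub_eq_add_neg, add_assoc, mul_comm]

theorem whiteQadj_whiteQ_single_right :
    whiteQadj u v w (whiteQ u v w (Pi.single (m + 1, n) 1)) (m, n)
      = u (m + 1, n) * v (m + 1, n) := by
  simp [whiteQ, whiteQadj, sub_eq_add_neg, add_assoc, mul_comm]

theorem whiteQadj_whiteQ_single_up :
    whiteQadj u v w (whiteQ u v w (Pi.single (m, n + 1) 1)) (m, n)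
      = u (m, n + 1) * w (m, n + 1) := by
  simp [whiteQ, whiteQadj, sub_eq_add_neg, add_assoc, mul_comm]

theorem whiteQadj_whiteQ_single_up_left :
    whiteQadj u v w (whiteQ u v w (Pi.single (m, n + 1) 1)) (m + 1, n)
      = v (m + 1, n + 1) * w (m + 1, n + 1) := by
  simp [whiteQ, whiteQadj, sub_eq_add_neg, add_assoc, mul_comm]

end Entries

theorem black_white_factorizations_give_SL2_connection_general
    (u v w u' v' w' : ℤ × ℤ → ℝ) (W W' : ℤ × ℤ → ℝ)
    (hsame : ∀ ψ : ℤ × ℤ → ℝ, ∀ m n : ℤ,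
      blackQadj u v w (blackQ u v w ψ) (m, n) + W (m, n) * ψ (m, n)
      = whiteQadj u' v' w' (whiteQ u' v' w' ψ) (m, n) + W' (m, n) * ψ (m, n)) :
    ∀ m n : ℤ,
      u (m, n) * v (m, n) = u' (m + 1, n) * v' (m + 1, n) ∧
      u (m, n) * w (m, n) = u' (m, n + 1) * w' (m, n + 1) ∧
      v (m, n) * w (m, n) = v' (m + 1, n + 1) * w' (m + 1, n + 1) := by
  have entries_eq {p q : ℤ × ℤ} (hpq : p ≠ q) :
      blackQadj u v w (blackQ u v w (Pi.single q 1)) p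
        = whiteQadj u' v' w' (whiteQ u' v' w' (Pi.single q 1)) p :=
    apply_single_eq_of_add_potential_eq (fun ψ p => hsame ψ p.1 p.2) hpq
  intro m n
  refine ⟨?_, ?_, ?_⟩
  · rw [← blackQadj_blackQ_single_right, ← whiteQadj_whiteQ_single_right]
    exact entries_eq (by simp)
  · rw [← blackQadj_blackQ_single_up, ← whiteQadj_whiteQ_single_up]
    exact entries_eq (by simp)
  · rw [← blackQadj_blackQ_single_up_left, ← whiteQadj_whiteQ_single_up_left]
    exact entries_eq (by simp)

/-- If the black and white factorizations `Q⁺Q + W` and `Q'⁺Q' + W'`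
give the same operator on the equilateral triangle lattice, then the products of the
black-triangle and white-triangle coefficients attached to each edge coincide
(the pair `{Q, Q'}` defines an `SL₂` discrete connection). -/
theorem black_white_factorizations_give_SL2_connection
    (u v w u' v' w' : ℤ × ℤ → ℝ) (W W' : ℤ × ℤ → ℝ)
    (hu : ∀ p, 0 < u p) (hv : ∀ p, 0 < v p) (hw : ∀ p, 0 < w p)
    (hu' : ∀ p, 0 < u' p) (hv' : ∀ p, 0 < v' p) (hw' : ∀ p, 0 < w' p)
    (hsame : ∀ ψ : ℤ × ℤ → ℝ, ∀ m n : ℤ,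
      blackQadj u v w (blackQ u v w ψ) (m, n) + W (m, n) * ψ (m, n)
      = whiteQadj u' v' w' (whiteQ u' v' w' ψ) (m, n) + W' (m, n) * ψ (m, n)) :
    ∀ m n : ℤ,
      u (m, n) * v (m, n) = u' (m + 1, n) * v' (m + 1, n) ∧
      u (m, n) * w (m, n) = u' (m, n + 1) * w' (m, n + 1) ∧
      v (m, n) * w (m, n) = v' (m + 1, n + 1) * w' (m + 1, n + 1) :=
  black_white_factorizations_give_SL2_connection_general u v w u' v' w' W W' hsame
end

section
/- Let G be a simple graph on a vertex set V that is a tree (connected and acyclic), let d : V → V → ℝ satisfy d(P,P') ≠ 0 whenever P and P' are adjacent, and let b : V → V → ℝ be symmetric (b(P,P') = b(P',P)). Fix a vertex P₀ ∈ V and a real number c. Then there exists exactly one function v : V → ℝ with v(P₀) = c such that b(P,P') = d(P',P)·v(P) + d(P,P')·v(P') for every pair of adjacent vertices P, P'. In particular, on a tree the solutions v of this system form a one-parameter family parametrized by the initial value v(P₀). -/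
/-!
On an edge `P P'` the relation `b(P,P') = d(P',P)·v(P) + d(P,P')·v(P')` determines `v(P')` from
`v(P)`, so along any walk a solution is obtained from its initial value by propagating edge by
edge; this gives uniqueness. On a tree, propagating `c` along the unique path from `P₀` defines a
solution: for an edge `P P'` one of the two paths from `P₀` extends the other by that edge, and
the symmetry of `b` makes the relation independent of the direction in which it was imposed.
-/

open SimpleGraph

section

variable {V : Type*}

def IsEdgeSolution (G : SimpleGraph V) (d b : V → V → ℝ) (v : V → ℝ) : Prop :=
  ∀ P P', G.Adj P P' → b P P' = d P' P * v P + d P P' * v P'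

variable {G : SimpleGraph V}

noncomputable def edgeStep (d b : V → V → ℝ) (P P' : V) (x : ℝ) : ℝ :=
  (b P P' - d P' P * x) / d P P'

theorem eq_edgeStep_iff {d b : V → V → ℝ} {P P' : V} (hd : d P P' ≠ 0) {x y : ℝ} :
    y = edgeStep d b P P' x ↔ b P P' = d P' P * x + d P P' * y := by
  rw [edgeStep, eq_div_iff hd]
  constructor <;> intro h <;> linarith

noncomputable def SimpleGraph.Walk.propagate (d b : V → V → ℝ) :
    ∀ {u w : V}, G.Walk u w → ℝ → ℝ
  | _, _, .nil, x => x
  | _, _, .cons (v := P') (u := P) _ p, x => p.propagate d b (edgeStep d b P P' x)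

namespace SimpleGraph.Walk

variable (d b : V → V → ℝ)

@[simp]
theorem propagate_nil {u : V} (x : ℝ) : (nil : G.Walk u u).propagate d b x = x := rfl

theorem propagate_concat {u w w' : V} (p : G.Walk u w) (h : G.Adj w w') (x : ℝ) :
    (p.concat h).propagate d b x = edgeStep d b w w' (p.propagate d b x) := by
  induction p generalizing x with
  | nil => rfl
  | cons _ p ih => exact ih h _

end SimpleGraph.Walk

theorem IsEdgeSolution.apply_eq_propagate {d b : V → V → ℝ} {v : V → ℝ}
    (hd : ∀ P P', G.Adj P P' → d P P' ≠ 0) (hv : IsEdgeSolution G d b v) {u w : V}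
    (p : G.Walk u w) : v w = p.propagate d b (v u) := by
  induction p with
  | nil => rfl
  | cons h p ih => rw [ih, (eq_edgeStep_iff (hd _ _ h)).mpr (hv _ _ h)]; rfl

theorem SimpleGraph.IsAcyclic.eq_concat_or_eq_concat (hG : G.IsAcyclic) {u x y : V}
    {p : G.Walk u x} {q : G.Walk u y} (hp : p.IsPath) (hq : q.IsPath) (h : G.Adj x y) :
    q = p.concat h ∨ p = q.concat h.symm := by
  by_cases hx : x ∈ q.support
  · exact .inl (hG.path_concat hp hq h hx)
  · exact .inr (hG.path_concat hq hp h.symm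
      (hG.mem_support_of_ne_mem_support_of_adj_of_isPath hp hq h hx))

theorem SimpleGraph.IsAcyclic.isEdgeSolution_propagate (hG : G.IsAcyclic) {d b : V → V → ℝ}
    (hd : ∀ P P', G.Adj P P' → d P P' ≠ 0) (hb : ∀ P P', b P P' = b P' P) {P₀ : V}
    (p : ∀ P, G.Walk P₀ P) (hp : ∀ P, (p P).IsPath) (c : ℝ) :
    IsEdgeSolution G d b fun P => (p P).propagate d b c := by
  intro P P' h
  rcases hG.eq_concat_or_eq_concat (hp P) (hp P') h with hP' | hP
  · rw [← eq_edgeStep_iff (hd P P' h)]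
    dsimp only
    rw [hP', Walk.propagate_concat]
  · have hrel : b P' P = d P P' * (p P').propagate d b c + d P' P * (p P).propagate d b c := by
      rw [← eq_edgeStep_iff (hd P' P h.symm), hP, Walk.propagate_concat]
    rw [hb, hrel]
    ring

end

/-- On a tree, the system `b(P,P') = d(P',P)·v(P) + d(P,P')·v(P')`
over the edges (with `d` nonvanishing on adjacent pairs and `b` symmetric) has exactly
one solution `v` with a prescribed value `v(P₀) = c`: the solutions form a
one-parameter family parametrized by the initial value at the selected vertex. -/
theorem tree_factorization_potential_unique
    {V : Type*} (G : SimpleGraph V) (hG : G.IsTree)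
    (d : V → V → ℝ) (hd : ∀ P P', G.Adj P P' → d P P' ≠ 0)
    (b : V → V → ℝ) (hb : ∀ P P', b P P' = b P' P)
    (P₀ : V) (c : ℝ) :
    ∃! v : V → ℝ, v P₀ = c ∧
      ∀ P P', G.Adj P P' → b P P' = d P' P * v P + d P P' * v P' := by
  choose p hp _ using fun P => hG.existsUnique_path P₀ P
  have hp₀ : p P₀ = .nil := (Walk.isPath_iff_nil.mp (hp P₀)).eq_nil
  refine ⟨fun P => (p P).propagate d b c, ⟨by simp [hp₀], ?_⟩, ?_⟩
  · exact hG.isAcyclic.isEdgeSolution_propagate hd hb p hp c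
  · rintro v ⟨hv₀, hv⟩
    funext P
    rw [IsEdgeSolution.apply_eq_propagate hd hv (p P), hv₀]
end

section
/- Let V and 𝒯 be finite types, let vert : 𝒯 → Fin 3 → V be such that vert t is injective for each t ∈ 𝒯, and let c : 𝒯 → Fin 3 → ℝ be everywhere positive. Set σ(t) = c t 0·c t 1 + c t 1·c t 2 + c t 2·c t 0, c'(t,i) = σ(t)/c t i, C'(t) = c'(t,0) + c'(t,1) + c'(t,2), and let Q be the 𝒯 × V real matrix with Q t P = c'(t,i) if P = vert t i for some i and Q t P = 0 otherwise. Then the matrix M = Qᵀ·diag(C')⁻¹·Q satisfies: for distinct vertices P ≠ P', M(P,P') = Σ over all t ∈ 𝒯 and indices i ≠ j with vert t i = P and vert t j = P' of c t k (k the remaining index); and M(P,P) = Σ over all t and i with vert t i = P of (c t j · c t k)/(c t i) (j, k the remaining indices). Consequently M = L + W, where L is the symmetric matrix whose off-diagonal entry at (P,P') is the total conductivity between P and P' and whose diagonal is zero, and W is the diagonal matrix with entries W(P,P) = Σ_{t,i : vert t i = P} (c t j·c t k)/(c t i). -/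
/-! The star conductivities sum to `C' = σ² / (c₀ c₁ c₂)`, so corners `i, j` of a triangle
contribute `c'ᵢ c'ⱼ / C' = c₀ c₁ c₂ / (cᵢ cⱼ)` to `Qᵀ diag(C')⁻¹ Q`: the conductivity of the
third side when `i ≠ j`, and `c_{i+1} c_{i+2} / cᵢ` when `i = j`. As the corners of a triangle
are distinct vertices, the pairs with `i = j` are exactly those landing on the diagonal. -/

open Matrix

/-- For two distinct indices `i j : Fin 3`, `thirdIndex i j` is the remaining index
(using `0 + 1 + 2 = 0` in `Fin 3`). -/
def thirdIndex (i j : Fin 3) : Fin 3 := -(i + j)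

theorem Fin.prod_univ_three_eq_mul_mul_thirdIndex {M : Type*} [CommMonoid M] (f : Fin 3 → M)
    {i j : Fin 3} (hij : i ≠ j) : ∏ k, f k = f i * f j * f (thirdIndex i j) := by
  rw [Fin.prod_univ_three]
  fin_cases i <;> fin_cases j <;>
    simp [thirdIndex, show (-1 : Fin 3) = 2 from rfl, show (-2 : Fin 3) = 1 from rfl]
      at hij ⊢ <;>
    grind

theorem Fin.prod_univ_three_eq_mul_add_one_mul_add_two {M : Type*} [CommMonoid M]
    (f : Fin 3 → M) (i : Fin 3) : ∏ k, f k = f i * f (i + 1) * f (i + 2) := by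
  rw [Fin.prod_univ_three]
  fin_cases i <;> simp <;> grind

theorem Matrix.inv_diagonal_of_ne_zero {n K : Type*} [Fintype n] [DecidableEq n] [Field K]
    {v : n → K} (hv : ∀ i, v i ≠ 0) : (diagonal v)⁻¹ = diagonal v⁻¹ :=
  inv_eq_right_inv <| by
    rw [diagonal_mul_diagonal, ← diagonal_one]
    exact congrArg diagonal (funext fun i => mul_inv_cancel₀ (hv i))

theorem Matrix.transpose_mul_diagonal_mul_apply {m n R : Type*} [Fintype m] [DecidableEq m]
    [CommSemiring R] (Q : Matrix m n R) (d : m → R) (P P' : n) :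
    (Qᵀ * diagonal d * Q) P P' = ∑ t, d t * (Q t P * Q t P') := by
  rw [mul_apply]
  simp only [mul_diagonal, transpose_apply]
  exact Finset.sum_congr rfl fun _ _ => by ring

theorem Matrix.transpose_mul_diagonal_mul_apply_of_eq_sum_ite {𝒯 ι V R : Type*} [Fintype 𝒯]
    [Fintype ι] [DecidableEq 𝒯] [DecidableEq V] [CommSemiring R] {vert : 𝒯 → ι → V}
    {w : 𝒯 → ι → R} {Q : Matrix 𝒯 V R}
    (hQ : ∀ t P, Q t P = ∑ i, if vert t i = P then w t i else 0) (d : 𝒯 → R) (P P' : V) :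
    (Qᵀ * diagonal d * Q) P P' =
      ∑ t, ∑ i, ∑ j, if vert t i = P ∧ vert t j = P' then d t * (w t i * w t j) else 0 := by
  rw [transpose_mul_diagonal_mul_apply]
  refine Finset.sum_congr rfl fun t _ => ?_
  rw [hQ, hQ, Finset.sum_mul_sum]
  simp only [ite_zero_mul_ite_zero]
  simp only [Finset.mul_sum, mul_ite, mul_zero]

section StarTriangle

variable {a : Fin 3 → ℝ} {σ : ℝ}

theorem inv_sum_star_mul_star (ha : ∀ k, a k ≠ 0)
    (hσ : σ = a 0 * a 1 + a 1 * a 2 + a 2 * a 0) (hσ0 : σ ≠ 0) (i j : Fin 3) :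
    (σ / a 0 + σ / a 1 + σ / a 2)⁻¹ * (σ / a i * (σ / a j)) = (∏ k, a k) / (a i * a j) := by
  have := ha 0; have := ha 1; have := ha 2; have := ha i; have := ha j
  have hsum : σ / a 0 + σ / a 1 + σ / a 2 = σ ^ 2 / ∏ k, a k := by
    rw [Fin.prod_univ_three]
    field_simp
    rw [hσ]
    ring
  rw [hsum]
  field_simp

theorem inv_sum_star_mul_star_of_ne (ha : ∀ k, a k ≠ 0)
    (hσ : σ = a 0 * a 1 + a 1 * a 2 + a 2 * a 0) (hσ0 : σ ≠ 0) {i j : Fin 3} (hij : i ≠ j) :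
    (σ / a 0 + σ / a 1 + σ / a 2)⁻¹ * (σ / a i * (σ / a j)) = a (thirdIndex i j) := by
  rw [inv_sum_star_mul_star ha hσ hσ0, Fin.prod_univ_three_eq_mul_mul_thirdIndex a hij]
  field_simp [ha i, ha j]

theorem inv_sum_star_mul_star_self (ha : ∀ k, a k ≠ 0)
    (hσ : σ = a 0 * a 1 + a 1 * a 2 + a 2 * a 0) (hσ0 : σ ≠ 0) (i : Fin 3) :
    (σ / a 0 + σ / a 1 + σ / a 2)⁻¹ * (σ / a i * (σ / a i)) =
      a (i + 1) * a (i + 2) / a i := by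
  rw [inv_sum_star_mul_star ha hσ hσ0, Fin.prod_univ_three_eq_mul_add_one_mul_add_two a i]
  field_simp [ha i]

end StarTriangle

section IncidenceSums

variable {𝒯 ι V R : Type*} [Fintype 𝒯] [Fintype ι] [DecidableEq ι] [DecidableEq V]
  [AddCommMonoid R] {vert : 𝒯 → ι → V}

theorem sum_ite_vert_eq_and_vert_eq_of_ne {P P' : V} (hPP' : P ≠ P') {f g : 𝒯 → ι → ι → R}
    (hfg : ∀ t i j, i ≠ j → f t i j = g t i j) :
    ∑ t, ∑ i, ∑ j, (if vert t i = P ∧ vert t j = P' then f t i j else 0) =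
      ∑ t, ∑ i, ∑ j, if i ≠ j ∧ vert t i = P ∧ vert t j = P' then g t i j else 0 := by
  refine Finset.sum_congr rfl fun t _ => Finset.sum_congr rfl fun i _ =>
    Finset.sum_congr rfl fun j _ => ?_
  rcases eq_or_ne i j with rfl | hij
  · simp only [ne_eq, not_true_eq_false, false_and, if_false]
    exact if_neg fun ⟨hP, hP'⟩ => hPP' (hP.symm.trans hP')
  · simp only [ne_eq, hij, not_false_eq_true, true_and, hfg t i j hij]

theorem sum_ite_vert_eq_and_vert_eq_self (hvert : ∀ t, Function.Injective (vert t)) (P : V)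
    {f : 𝒯 → ι → ι → R} {g : 𝒯 → ι → R} (hfg : ∀ t i, f t i i = g t i) :
    ∑ t, ∑ i, ∑ j, (if vert t i = P ∧ vert t j = P then f t i j else 0) =
      ∑ t, ∑ i, if vert t i = P then g t i else 0 := by
  refine Finset.sum_congr rfl fun t _ => Finset.sum_congr rfl fun i _ => ?_
  by_cases hi : vert t i = P
  · have hj : ∀ j, (vert t i = P ∧ vert t j = P) ↔ i = j := fun j =>
      ⟨fun h => hvert t (h.1.trans h.2.symm), fun h => ⟨hi, h ▸ hi⟩⟩
    simp_rw [hj]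
    rw [Finset.sum_ite_eq, if_pos (Finset.mem_univ i), if_pos hi, hfg]
  · simp only [hi, false_and, if_false, Finset.sum_const_zero]

end IncidenceSums

theorem black_triangle_factorization_of_conductivity_operator_general
    {V 𝒯 : Type*} [Fintype 𝒯] [DecidableEq V] [DecidableEq 𝒯]
    (vert : 𝒯 → Fin 3 → V) (hvert : ∀ t, Function.Injective (vert t))
    (c : 𝒯 → Fin 3 → ℝ) (hc : ∀ t i, 0 < c t i)
    (σ : 𝒯 → ℝ) (hσ : ∀ t, σ t = c t 0 * c t 1 + c t 1 * c t 2 + c t 2 * c t 0)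
    (c' : 𝒯 → Fin 3 → ℝ) (hc' : ∀ t i, c' t i = σ t / c t i)
    (C' : 𝒯 → ℝ) (hC' : ∀ t, C' t = c' t 0 + c' t 1 + c' t 2)
    (Q : Matrix 𝒯 V ℝ)
    (hQ : ∀ t P, Q t P = ∑ i : Fin 3, if vert t i = P then c' t i else 0)
    (M : Matrix V V ℝ) (hM : M = Qᵀ * (Matrix.diagonal C')⁻¹ * Q)
    (L : Matrix V V ℝ)
    (hL : ∀ P P' : V, L P P' = if P = P' then 0 else
      ∑ t : 𝒯, ∑ i : Fin 3, ∑ j : Fin 3,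
        if i ≠ j ∧ vert t i = P ∧ vert t j = P' then c t (thirdIndex i j) else 0)
    (W : Matrix V V ℝ)
    (hW : W = Matrix.diagonal (fun P =>
      ∑ t : 𝒯, ∑ i : Fin 3,
        if vert t i = P then c t (i + 1) * c t (i + 2) / c t i else 0)) :
    (∀ P P' : V, P ≠ P' →
      M P P' = ∑ t : 𝒯, ∑ i : Fin 3, ∑ j : Fin 3,
        if i ≠ j ∧ vert t i = P ∧ vert t j = P' then c t (thirdIndex i j) else 0) ∧
    (∀ P : V,
      M P P = ∑ t : 𝒯, ∑ i : Fin 3,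
        if vert t i = P then c t (i + 1) * c t (i + 2) / c t i else 0) ∧
    M = L + W := by
  have hc0 : ∀ t i, c t i ≠ 0 := fun t i => (hc t i).ne'
  have hσpos : ∀ t, 0 < σ t := fun t => by
    have := hc t 0; have := hc t 1; have := hc t 2
    rw [hσ]; positivity
  have hC'pos : ∀ t, 0 < C' t := fun t => by
    have := hσpos t; have := hc t 0; have := hc t 1; have := hc t 2
    rw [hC', hc', hc', hc']; positivity
  have hMentry : ∀ P P', M P P' = ∑ t, ∑ i, ∑ j,
      if vert t i = P ∧ vert t j = P' then (C' t)⁻¹ * (c' t i * c' t j) else 0 := fun P P' => by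
    rw [hM, inv_diagonal_of_ne_zero fun t => (hC'pos t).ne',
      transpose_mul_diagonal_mul_apply_of_eq_sum_ite hQ]
    rfl
  have hoff : ∀ P P' : V, P ≠ P' → M P P' = ∑ t, ∑ i, ∑ j,
      if i ≠ j ∧ vert t i = P ∧ vert t j = P' then c t (thirdIndex i j) else 0 :=
    fun P P' hPP' => (hMentry P P').trans <| sum_ite_vert_eq_and_vert_eq_of_ne hPP'
      fun t i j hij => by
        simp only [hC', hc']
        exact inv_sum_star_mul_star_of_ne (hc0 t) (hσ t) (hσpos t).ne' hij
  have hdiag : ∀ P : V, M P P = ∑ t, ∑ i,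
      if vert t i = P then c t (i + 1) * c t (i + 2) / c t i else 0 :=
    fun P => (hMentry P P).trans <| sum_ite_vert_eq_and_vert_eq_self hvert P fun t i => by
      simp only [hC', hc']
      exact inv_sum_star_mul_star_self (hc0 t) (hσ t) (hσpos t).ne' i
  refine ⟨hoff, hdiag, ?_⟩
  ext P P'
  rcases eq_or_ne P P' with rfl | hPP'
  · simp [hL, hW, hdiag]
  · simp [hL, hW, hPP', hoff P P' hPP']

/-- Novikov–Dynnikov black-triangle factorization of the conductivity
operator of an electric circuit: with star conductivities `c'(t,i) = σ(t)/c(t,i)`,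
total star conductivities `C'(t)` and the black triangle matrix `Q`, the matrix
`M = Qᵀ·diag(C')⁻¹·Q` has off-diagonal entries equal to the total conductivity between
the corresponding vertices and diagonal entries `Σ (c t j·c t k)/(c t i)`; hence
`M = L + W`. -/
theorem black_triangle_factorization_of_conductivity_operator
    {V 𝒯 : Type*} [Fintype V] [Fintype 𝒯] [DecidableEq V] [DecidableEq 𝒯]
    (vert : 𝒯 → Fin 3 → V) (hvert : ∀ t, Function.Injective (vert t))
    (c : 𝒯 → Fin 3 → ℝ) (hc : ∀ t i, 0 < c t i)
    (σ : 𝒯 → ℝ) (hσ : ∀ t, σ t = c t 0 * c t 1 + c t 1 * c t 2 + c t 2 * c t 0)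
    (c' : 𝒯 → Fin 3 → ℝ) (hc' : ∀ t i, c' t i = σ t / c t i)
    (C' : 𝒯 → ℝ) (hC' : ∀ t, C' t = c' t 0 + c' t 1 + c' t 2)
    (Q : Matrix 𝒯 V ℝ)
    (hQ : ∀ t P, Q t P = ∑ i : Fin 3, if vert t i = P then c' t i else 0)
    (M : Matrix V V ℝ) (hM : M = Qᵀ * (Matrix.diagonal C')⁻¹ * Q)
    (L : Matrix V V ℝ)
    (hL : ∀ P P' : V, L P P' = if P = P' then 0 else
      ∑ t : 𝒯, ∑ i : Fin 3, ∑ j : Fin 3,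
        if i ≠ j ∧ vert t i = P ∧ vert t j = P' then c t (thirdIndex i j) else 0)
    (W : Matrix V V ℝ)
    (hW : W = Matrix.diagonal (fun P =>
      ∑ t : 𝒯, ∑ i : Fin 3,
        if vert t i = P then c t (i + 1) * c t (i + 2) / c t i else 0)) :
    (∀ P P' : V, P ≠ P' →
      M P P' = ∑ t : 𝒯, ∑ i : Fin 3, ∑ j : Fin 3,
        if i ≠ j ∧ vert t i = P ∧ vert t j = P' then c t (thirdIndex i j) else 0) ∧
    (∀ P : V,
      M P P = ∑ t : 𝒯, ∑ i : Fin 3,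
        if vert t i = P then c t (i + 1) * c t (i + 2) / c t i else 0) ∧
    M = L + W :=
  black_triangle_factorization_of_conductivity_operator_general vert hvert c hc σ hσ c' hc' C' hC' Q
    hQ M hM L hL W hW
end
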